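/- arXiv:1907.11442 — 3 statements merged into one kernel-verified Lean document; each statement's English description precedes it below -/
import Mathlib

section
/- Boolean cumulants are expressed in terms of free cumulants by β_n(X_1,…,X_n) = ∑_{π ∈ NC_irr(n)} κ_π(X_1,…,X_n), where the sum runs over irreducible noncrossing partitions of {1,…,n}, i.e., noncrossing partitions in which 1 and n lie in the same block. -/
open scoped BigOperators Classical

/-- A set partition of `{0,…,n-1}`, encoded by the map sending each element to the
minimum of its block: `p` is idempotent and decreasing, the blocks being its fibers. -/
def IsPartRep {n : ℕ} (p : Fin n → Fin n) : Prop :=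
  (∀ i, p (p i) = p i) ∧ (∀ i, p i ≤ i)

/-- The partition represented by `p` is noncrossing: there is no configuration
`i < j < k < l` with `i ∼ k`, `j ∼ l` and `i ≁ j`. -/
def IsNC {n : ℕ} (p : Fin n → Fin n) : Prop :=
  ∀ i j k l : Fin n, i < j → j < k → k < l → p i = p k → p j = p l → p i = p j

/-- The partition represented by `p` is an interval partition: every block is an
interval. -/
def IsIntervalPart {n : ℕ} (p : Fin n → Fin n) : Prop :=
  ∀ i j k : Fin n, i ≤ j → j ≤ k → p i = p k → p j = p i

/-- Given a family of multilinear functionals `κ` and a partition (represented by `p`)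
of `{0,…,n-1}`, the partitioned functional `κ_π(a) = ∏_{B ∈ π} κ_{|B|}(a|B)`, where the
arguments of each factor are the entries of `a` along a block, in increasing order. -/
noncomputable def partFunctional {A : Type*} {n : ℕ}
    (κ : (m : ℕ) → (Fin m → A) → ℂ) (p : Fin n → Fin n) (a : Fin n → A) : ℂ :=
  ∏ b ∈ Finset.image p Finset.univ,
    κ (Finset.univ.filter (fun i => p i = b)).card
      (fun j => a ((Finset.univ.filter (fun i => p i = b)).orderEmbOfFin rfl j))

/-- `κ` is the family of free cumulants of `φ`: the moment–cumulant relation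
`φ(a₁⋯aₙ) = ∑_{π ∈ NC(n)} κ_π(a₁,…,aₙ)` over noncrossing partitions. -/
def IsFreeCumulantSeq {A : Type*} [Ring A] (φ : A → ℂ)
    (κ : (m : ℕ) → (Fin m → A) → ℂ) : Prop :=
  ∀ (n : ℕ), 0 < n → ∀ a : Fin n → A,
    φ (List.ofFn a).prod =
      ∑ p ∈ Finset.univ.filter (fun p : Fin n → Fin n => IsPartRep p ∧ IsNC p),
        partFunctional κ p a

/-- `β` is the family of Boolean cumulants of `φ`: the moment–cumulant relation
`φ(a₁⋯aₙ) = ∑_{π ∈ IP(n)} β_π(a₁,…,aₙ)` over interval partitions. -/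
def IsBooleanCumulantSeq {A : Type*} [Ring A] (φ : A → ℂ)
    (β : (m : ℕ) → (Fin m → A) → ℂ) : Prop :=
  ∀ (n : ℕ), 0 < n → ∀ a : Fin n → A,
    φ (List.ofFn a).prod =
      ∑ p ∈ Finset.univ.filter
          (fun p : Fin n → Fin n => IsPartRep p ∧ IsIntervalPart p),
        partFunctional β p a

namespace BF

variable {A : Type*}

/-- inclusion of the initial segment `{0,…,k}`. -/
def e1 {n : ℕ} (k : Fin n) : Fin (k.val + 1) → Fin n :=
  fun j => ⟨j.val, by have := j.isLt; have := k.isLt; omega⟩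

/-- inclusion of the final segment `{k+1,…,n-1}`. -/
def e2 {n : ℕ} (k : Fin n) : Fin (n - 1 - k.val) → Fin n :=
  fun j => ⟨k.val + 1 + j.val, by have := j.isLt; omega⟩

def take {n : ℕ} (k : Fin n) (a : Fin n → A) : Fin (k.val + 1) → A := fun j => a (e1 k j)

def drop {n : ℕ} (k : Fin n) (a : Fin n → A) : Fin (n - 1 - k.val) → A := fun j => a (e2 k j)

def joinN {n : ℕ} (k : Fin n) (q : Fin (k.val + 1) → Fin (k.val + 1))
    (r : Fin (n - 1 - k.val) → Fin (n - 1 - k.val)) : Fin n → Fin n := fun i =>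
  if h : i.val ≤ k.val then e1 k (q ⟨i.val, by omega⟩)
  else e2 k (r ⟨i.val - (k.val + 1), by have := i.isLt; omega⟩)

def split1 {n : ℕ} (k : Fin n) (p : Fin n → Fin n) : Fin (k.val + 1) → Fin (k.val + 1) :=
  fun i => ⟨min (p (e1 k i)).val k.val, by omega⟩

def split2 {n : ℕ} (k : Fin n) (p : Fin n → Fin n) :
    Fin (n - 1 - k.val) → Fin (n - 1 - k.val) :=
  fun j => ⟨(p (e2 k j)).val - (k.val + 1), by
    have := j.isLt; have := (p (e2 k j)).isLt; have := k.isLt; omega⟩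

lemma e1_val {n : ℕ} (k : Fin n) (j : Fin (k.val + 1)) : (e1 k j).val = j.val := rfl

lemma e2_val {n : ℕ} (k : Fin n) (j : Fin (n - 1 - k.val)) :
    (e2 k j).val = k.val + 1 + j.val := rfl

lemma e1_strictMono {n : ℕ} (k : Fin n) : StrictMono (e1 k) := fun a b h => by
  rw [Fin.lt_def] at h ⊢; exact h

lemma e2_strictMono {n : ℕ} (k : Fin n) : StrictMono (e2 k) := fun a b h => by
  rw [Fin.lt_def] at h ⊢; simp only [e2_val]; omega

lemma joinN_apply_le {n : ℕ} (k : Fin n) (q) (r) (i : Fin n) (h : i.val ≤ k.val) :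
    joinN k q r i = e1 k (q ⟨i.val, by omega⟩) := by
  simp [joinN, h]

lemma joinN_apply_gt {n : ℕ} (k : Fin n) (q) (r) (i : Fin n) (h : ¬ i.val ≤ k.val) :
    joinN k q r i = e2 k (r ⟨i.val - (k.val + 1), by have := i.isLt; omega⟩) := by
  simp [joinN, h]

lemma joinN_e1 {n : ℕ} (k : Fin n) (q) (r) (j : Fin (k.val + 1)) :
    joinN k q r (e1 k j) = e1 k (q j) := by
  rw [joinN_apply_le k q r _ (by exact Nat.lt_succ_iff.mp j.isLt)]
  rfl

lemma joinN_e2 {n : ℕ} (k : Fin n) (q) (r) (j : Fin (n - 1 - k.val)) :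
    joinN k q r (e2 k j) = e2 k (r j) := by
  rw [joinN_apply_gt k q r _ (by simp [e2_val]; omega)]
  congr 1
  apply Fin.ext
  simp [e2_val]

/-- value side of `joinN`. -/
lemma joinN_val_le_iff {n : ℕ} (k : Fin n) (q) (r) (i : Fin n) :
    (joinN k q r i).val ≤ k.val ↔ i.val ≤ k.val := by
  by_cases h : i.val ≤ k.val
  · rw [joinN_apply_le k q r i h]
    have := (q ⟨i.val, by omega⟩).isLt
    simp [e1_val]; omega
  · rw [joinN_apply_gt k q r i h]
    simp [e2_val]; omega

/-- congruence for a cumulant functional along an equality of arities. -/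
lemma kappaCongr (κ : (m : ℕ) → (Fin m → A) → ℂ) {c₁ c₂ : ℕ} (h : c₁ = c₂)
    {f : Fin c₁ → A} {g : Fin c₂ → A} (hfg : ∀ j : Fin c₂, f (Fin.cast h.symm j) = g j) :
    κ c₁ f = κ c₂ g := by
  subst h
  congr 1
  funext j
  simpa using hfg j

lemma partFactor_congr (κ : (m : ℕ) → (Fin m → A) → ℂ) {n : ℕ} (S S' : Finset (Fin n))
    (h : S = S') (a : Fin n → A) :
    κ S.card (fun j => a (S.orderEmbOfFin rfl j))
      = κ S'.card (fun j => a (S'.orderEmbOfFin rfl j)) := by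
  subst h; rfl

/-- `partFunctional` of a join splits as a product. -/
lemma partFunctional_joinN (κ : (m : ℕ) → (Fin m → A) → ℂ) {n : ℕ} (k : Fin n)
    (q : Fin (k.val + 1) → Fin (k.val + 1)) (r : Fin (n - 1 - k.val) → Fin (n - 1 - k.val))
    (a : Fin n → A) :
    partFunctional κ (joinN k q r) a
      = partFunctional κ q (take k a) * partFunctional κ r (drop k a) := by
  classical
  have hemb1 : Function.Injective (e1 k) := (e1_strictMono k).injective
  have hemb2 : Function.Injective (e2 k) := (e2_strictMono k).injective
  -- image decomposition
  have himg : Finset.image (joinN k q r) Finset.univ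
      = (Finset.image q Finset.univ).map ⟨e1 k, hemb1⟩
        ∪ (Finset.image r Finset.univ).map ⟨e2 k, hemb2⟩ := by
    ext b
    simp only [Finset.mem_image, Finset.mem_union, Finset.mem_map, Finset.mem_univ, true_and,
      Function.Embedding.coeFn_mk]
    constructor
    · rintro ⟨i, rfl⟩
      by_cases h : i.val ≤ k.val
      · left
        exact ⟨q ⟨i.val, by omega⟩, ⟨_, rfl⟩, (joinN_apply_le k q r i h).symm⟩
      · right
        exact ⟨r ⟨i.val - (k.val+1), by have := i.isLt; omega⟩, ⟨_, rfl⟩,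
          (joinN_apply_gt k q r i h).symm⟩
    · rintro (⟨b', ⟨i, rfl⟩, rfl⟩ | ⟨b', ⟨i, rfl⟩, rfl⟩)
      · exact ⟨e1 k i, joinN_e1 k q r i⟩
      · exact ⟨e2 k i, joinN_e2 k q r i⟩
  have hdisj : Disjoint ((Finset.image q Finset.univ).map ⟨e1 k, hemb1⟩)
      ((Finset.image r Finset.univ).map ⟨e2 k, hemb2⟩) := by
    rw [Finset.disjoint_left]
    rintro b hb1 hb2
    simp only [Finset.mem_map, Function.Embedding.coeFn_mk] at hb1 hb2
    obtain ⟨x, -, rfl⟩ := hb1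
    obtain ⟨y, -, hy⟩ := hb2
    have h2 : (e2 k y).val = (e1 k x).val := congrArg Fin.val hy
    rw [e2_val, e1_val] at h2
    have := Nat.lt_succ_iff.mp x.isLt
    omega
  -- fibers over the two parts
  have hfib1 : ∀ b : Fin (k.val + 1),
      Finset.univ.filter (fun i => joinN k q r i = e1 k b)
        = (Finset.univ.filter (fun i => q i = b)).map ⟨e1 k, hemb1⟩ := by
    intro b
    ext i
    simp only [Finset.mem_filter, Finset.mem_univ, true_and, Finset.mem_map,
      Function.Embedding.coeFn_mk]
    constructor
    · intro hi
      by_cases h : i.val ≤ k.val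
      · refine ⟨⟨i.val, by omega⟩, ?_, Fin.ext rfl⟩
        rw [joinN_apply_le k q r i h] at hi
        exact hemb1 hi
      · exfalso
        rw [joinN_apply_gt k q r i h] at hi
        have h2 := congrArg Fin.val hi
        rw [e2_val, e1_val] at h2
        have := b.isLt
        omega
    · rintro ⟨j, hj, rfl⟩
      rw [joinN_e1, hj]
  have hfib2 : ∀ b : Fin (n - 1 - k.val),
      Finset.univ.filter (fun i => joinN k q r i = e2 k b)
        = (Finset.univ.filter (fun i => r i = b)).map ⟨e2 k, hemb2⟩ := by
    intro b
    ext i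
    simp only [Finset.mem_filter, Finset.mem_univ, true_and, Finset.mem_map,
      Function.Embedding.coeFn_mk]
    constructor
    · intro hi
      by_cases h : i.val ≤ k.val
      · exfalso
        rw [joinN_apply_le k q r i h] at hi
        have h2 := congrArg Fin.val hi
        rw [e2_val, e1_val] at h2
        have := (q ⟨i.val, by omega⟩).isLt
        omega
      · refine ⟨⟨i.val - (k.val + 1), by have := i.isLt; omega⟩, ?_, ?_⟩
        · rw [joinN_apply_gt k q r i h] at hi
          exact hemb2 hi
        · apply Fin.ext
          rw [e2_val]
          simp only []
          omega
    · rintro ⟨j, hj, rfl⟩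
      rw [joinN_e2, hj]
  -- reindexing of a single factor along a strictly monotone embedding
  have hfactor : ∀ (N s : ℕ) (e : Fin s → Fin N) (he : StrictMono e) (T : Finset (Fin s))
      (b : Fin N → A),
      κ (T.map ⟨e, he.injective⟩).card
          (fun j => b ((T.map ⟨e, he.injective⟩).orderEmbOfFin rfl j))
        = κ T.card (fun j => b (e (T.orderEmbOfFin rfl j))) := by
    intro N s e he T b
    have hc : (T.map ⟨e, he.injective⟩).card = T.card := Finset.card_map _
    apply kappaCongr κ hc
    intro j
    have key := Finset.orderEmbOfFin_unique
      (s := T.map ⟨e, he.injective⟩) (rfl)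
      (f := fun x : Fin (T.map ⟨e, he.injective⟩).card =>
        e (T.orderEmbOfFin rfl (Fin.cast hc x)))
      (fun x => by
        simp only [Finset.mem_map, Function.Embedding.coeFn_mk]
        exact ⟨_, Finset.orderEmbOfFin_mem _ _ _, rfl⟩)
      (fun x y hxy =>
        he ((T.orderEmbOfFin rfl).strictMono (by rw [Fin.lt_def] at hxy ⊢; exact hxy)))
    have h2 := congrFun key (Fin.cast hc.symm j)
    simp only [Fin.cast_cast, Fin.cast_eq_self] at h2
    rw [← h2]
  -- put it together
  rw [partFunctional, himg, Finset.prod_union hdisj, Finset.prod_map, Finset.prod_map]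
  rw [partFunctional, partFunctional]
  congr 1
  · apply Finset.prod_congr rfl
    intro b hb
    simp only [Function.Embedding.coeFn_mk]
    exact (partFactor_congr κ _ _ (hfib1 b) a).trans
      (hfactor n _ (e1 k) (e1_strictMono k) _ a)
  · apply Finset.prod_congr rfl
    intro b hb
    simp only [Function.Embedding.coeFn_mk]
    exact (partFactor_congr κ _ _ (hfib2 b) a).trans
      (hfactor n _ (e2 k) (e2_strictMono k) _ a)

lemma rep_joinN {n : ℕ} (k : Fin n) {q} {r} (hq : IsPartRep q) (hr : IsPartRep r) :
    IsPartRep (joinN k q r) := by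
  constructor
  · intro i
    by_cases h : i.val ≤ k.val
    · rw [joinN_apply_le k q r i h, joinN_e1, hq.1]
    · rw [joinN_apply_gt k q r i h, joinN_e2, hr.1]
  · intro i
    rw [Fin.le_def]
    by_cases h : i.val ≤ k.val
    · rw [joinN_apply_le k q r i h, e1_val]
      have := (hq.2 ⟨i.val, by omega⟩)
      rw [Fin.le_def] at this
      exact this
    · rw [joinN_apply_gt k q r i h, e2_val]
      have := hr.2 ⟨i.val - (k.val+1), by have := i.isLt; omega⟩
      rw [Fin.le_def] at this
      simp only [Fin.val_mk] at this ⊢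
      omega

lemma split1_joinN {n : ℕ} (k : Fin n) (q) (r) : split1 k (joinN k q r) = q := by
  funext i
  apply Fin.ext
  show min (joinN k q r (e1 k i)).val k.val = _
  rw [joinN_e1, e1_val]
  have := (q i).isLt
  omega

lemma split2_joinN {n : ℕ} (k : Fin n) (q) (r) : split2 k (joinN k q r) = r := by
  funext j
  apply Fin.ext
  show (joinN k q r (e2 k j)).val - (k.val + 1) = _
  rw [joinN_e2, e2_val]
  omega

lemma joinN_split {n : ℕ} (k : Fin n) (p : Fin n → Fin n) (hrep : IsPartRep p)
    (hsplit : ∀ i : Fin n, k.val < i.val → k.val < (p i).val) :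
    joinN k (split1 k p) (split2 k p) = p := by
  funext i
  by_cases h : i.val ≤ k.val
  · rw [joinN_apply_le _ _ _ i h]
    apply Fin.ext
    rw [e1_val]
    show min (p (e1 k ⟨i.val, by omega⟩)).val k.val = _
    have he : e1 k ⟨i.val, by omega⟩ = i := Fin.ext rfl
    rw [he]
    have := hrep.2 i
    rw [Fin.le_def] at this
    omega
  · rw [joinN_apply_gt _ _ _ i h]
    apply Fin.ext
    rw [e2_val]
    show k.val + 1 + ((p (e2 k ⟨i.val - (k.val+1), by have := i.isLt; omega⟩)).val - (k.val+1)) = _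
    have he : e2 k ⟨i.val - (k.val+1), by have := i.isLt; omega⟩ = i :=
      Fin.ext (by rw [e2_val]; simp only [Fin.val_mk]; omega)
    rw [he]
    have := hsplit i (by omega)
    omega

lemma rep_split1 {n : ℕ} (k : Fin n) (p : Fin n → Fin n) (hrep : IsPartRep p) :
    IsPartRep (split1 k p) := by
  have hval : ∀ i : Fin (k.val + 1), (split1 k p i).val = (p (e1 k i)).val := by
    intro i
    show min (p (e1 k i)).val k.val = _
    have := hrep.2 (e1 k i)
    rw [Fin.le_def, e1_val] at this
    have := i.isLt
    omega
  have hemb : ∀ i : Fin (k.val + 1), e1 k (split1 k p i) = p (e1 k i) := by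
    intro i
    apply Fin.ext
    rw [e1_val, hval]
  constructor
  · intro i
    apply Fin.ext
    rw [hval, hval, hemb, hrep.1]
  · intro i
    rw [Fin.le_def, hval]
    have := hrep.2 (e1 k i)
    rw [Fin.le_def, e1_val] at this
    exact this

lemma rep_split2 {n : ℕ} (k : Fin n) (p : Fin n → Fin n) (hrep : IsPartRep p)
    (hsplit : ∀ i : Fin n, k.val < i.val → k.val < (p i).val) :
    IsPartRep (split2 k p) := by
  have hemb : ∀ j : Fin (n - 1 - k.val), e2 k (split2 k p j) = p (e2 k j) := by
    intro j
    apply Fin.ext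
    rw [e2_val]
    show k.val + 1 + ((p (e2 k j)).val - (k.val + 1)) = _
    have := hsplit (e2 k j) (by rw [e2_val]; omega)
    omega
  constructor
  · intro j
    apply Fin.ext
    show (p (e2 k (split2 k p j))).val - (k.val+1) = (p (e2 k j)).val - (k.val+1)
    rw [hemb, hrep.1]
  · intro j
    rw [Fin.le_def]
    show (p (e2 k j)).val - (k.val + 1) ≤ j.val
    have := hrep.2 (e2 k j)
    rw [Fin.le_def, e2_val] at this
    omega

lemma nc_joinN_iff {n : ℕ} (k : Fin n) (q) (r) :
    IsNC (joinN k q r) ↔ IsNC q ∧ IsNC r := by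
  constructor
  · intro H
    constructor
    · intro i j k' l h1 h2 h3 hik hjl
      have := H (e1 k i) (e1 k j) (e1 k k') (e1 k l)
        (e1_strictMono k h1) (e1_strictMono k h2) (e1_strictMono k h3)
        (by rw [joinN_e1, joinN_e1, hik]) (by rw [joinN_e1, joinN_e1, hjl])
      rw [joinN_e1, joinN_e1] at this
      exact (e1_strictMono k).injective this
    · intro i j k' l h1 h2 h3 hik hjl
      have := H (e2 k i) (e2 k j) (e2 k k') (e2 k l)
        (e2_strictMono k h1) (e2_strictMono k h2) (e2_strictMono k h3)
        (by rw [joinN_e2, joinN_e2, hik]) (by rw [joinN_e2, joinN_e2, hjl])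
      rw [joinN_e2, joinN_e2] at this
      exact (e2_strictMono k).injective this
  · rintro ⟨hq, hr⟩ i j k' l h1 h2 h3 hik hjl
    rw [Fin.lt_def] at h1 h2 h3
    by_cases hi : i.val ≤ k.val
    · have hk' : k'.val ≤ k.val := by
        by_contra hk'
        have c1 := (joinN_val_le_iff k q r i).mpr hi
        have c2 := (joinN_val_le_iff k q r k')
        rw [hik] at c1
        rw [c2] at c1
        omega
      have hj : j.val ≤ k.val := by omega
      have hl : l.val ≤ k.val := by
        by_contra hl
        have c1 := (joinN_val_le_iff k q r j).mpr hj
        have c2 := (joinN_val_le_iff k q r l)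
        rw [hjl] at c1
        rw [c2] at c1
        omega
      rw [joinN_apply_le k q r i hi, joinN_apply_le k q r k' hk'] at hik
      rw [joinN_apply_le k q r j hj, joinN_apply_le k q r l hl] at hjl
      rw [joinN_apply_le k q r i hi, joinN_apply_le k q r j hj]
      congr 1
      apply hq _ _ _ _ (by rw [Fin.lt_def]; exact h1) (by rw [Fin.lt_def]; exact h2)
        (by rw [Fin.lt_def]; exact h3)
        ((e1_strictMono k).injective hik) ((e1_strictMono k).injective hjl)
    · have hj : ¬ j.val ≤ k.val := by omega
      have hk'' : ¬ k'.val ≤ k.val := by omega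
      have hl : ¬ l.val ≤ k.val := by omega
      rw [joinN_apply_gt k q r i hi, joinN_apply_gt k q r k' hk''] at hik
      rw [joinN_apply_gt k q r j hj, joinN_apply_gt k q r l hl] at hjl
      rw [joinN_apply_gt k q r i hi, joinN_apply_gt k q r j hj]
      congr 1
      apply hr _ _ _ _ (by rw [Fin.lt_def]; simp only [Fin.val_mk]; omega)
        (by rw [Fin.lt_def]; simp only [Fin.val_mk]; omega)
        (by rw [Fin.lt_def]; simp only [Fin.val_mk]; omega)
        ((e2_strictMono k).injective hik) ((e2_strictMono k).injective hjl)

lemma interval_joinN_iff {n : ℕ} (k : Fin n) (q) (r) :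
    IsIntervalPart (joinN k q r) ↔ IsIntervalPart q ∧ IsIntervalPart r := by
  constructor
  · intro H
    constructor
    · intro i j k' h1 h2 hik
      have := H (e1 k i) (e1 k j) (e1 k k')
        ((e1_strictMono k).monotone h1) ((e1_strictMono k).monotone h2)
        (by rw [joinN_e1, joinN_e1, hik])
      rw [joinN_e1, joinN_e1] at this
      exact (e1_strictMono k).injective this
    · intro i j k' h1 h2 hik
      have := H (e2 k i) (e2 k j) (e2 k k')
        ((e2_strictMono k).monotone h1) ((e2_strictMono k).monotone h2)
        (by rw [joinN_e2, joinN_e2, hik])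
      rw [joinN_e2, joinN_e2] at this
      exact (e2_strictMono k).injective this
  · rintro ⟨hq, hr⟩ i j k' h1 h2 hik
    rw [Fin.le_def] at h1 h2
    by_cases hk' : k'.val ≤ k.val
    · have hi : i.val ≤ k.val := by omega
      have hj : j.val ≤ k.val := by omega
      rw [joinN_apply_le k q r i hi, joinN_apply_le k q r k' hk'] at hik
      rw [joinN_apply_le k q r j hj, joinN_apply_le k q r i hi]
      congr 1
      apply hq _ _ _ (by rw [Fin.le_def]; exact h1) (by rw [Fin.le_def]; exact h2)
        ((e1_strictMono k).injective hik)
    · by_cases hi : i.val ≤ k.val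
      · exfalso
        have c1 := (joinN_val_le_iff k q r i).mpr hi
        have c2 := (joinN_val_le_iff k q r k')
        rw [hik] at c1
        rw [c2] at c1
        omega
      · have hj : ¬ j.val ≤ k.val := by omega
        rw [joinN_apply_gt k q r i hi, joinN_apply_gt k q r k' hk'] at hik
        rw [joinN_apply_gt k q r j hj, joinN_apply_gt k q r i hi]
        congr 1
        apply hr _ _ _ (by rw [Fin.le_def]; simp only [Fin.val_mk]; omega)
          (by rw [Fin.le_def]; simp only [Fin.val_mk]; omega)
          ((e2_strictMono k).injective hik)

def IsIrr {n : ℕ} (p : Fin n → Fin n) : Prop := ∀ i : Fin n, i.val = n - 1 → (p i).val = 0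

lemma sum_slice {n : ℕ} (k : Fin n) (E : ∀ {s : ℕ}, (Fin s → Fin s) → Prop)
    (hE : ∀ (q : Fin (k.val+1) → Fin (k.val+1)) (r : Fin (n-1-k.val) → Fin (n-1-k.val)),
      E (joinN k q r) ↔ E q ∧ E r)
    (F : (Fin n → Fin n) → ℂ) :
    ∑ p ∈ Finset.univ.filter (fun p : Fin n → Fin n =>
        (IsPartRep p ∧ E p) ∧ ((p k).val = 0 ∧ ∀ i : Fin n, k.val < i.val → k.val < (p i).val)),
      F p
    = ∑ qr ∈ (Finset.univ.filter (fun q : Fin (k.val+1) → Fin (k.val+1) =>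
          IsPartRep q ∧ E q ∧ IsIrr q)) ×ˢ
        (Finset.univ.filter (fun r : Fin (n-1-k.val) → Fin (n-1-k.val) => IsPartRep r ∧ E r)),
      F (joinN k qr.1 qr.2) := by
  apply Finset.sum_nbij' (fun p => (split1 k p, split2 k p)) (fun qr => joinN k qr.1 qr.2)
  · intro p hp
    simp only [Finset.mem_filter, Finset.mem_univ, true_and] at hp
    obtain ⟨⟨hrep, hEp⟩, h0, hsplit⟩ := hp
    have hj := joinN_split k p hrep hsplit
    have hEqr : E (split1 k p) ∧ E (split2 k p) := by
      rw [← hE]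
      rw [hj]
      exact hEp
    simp only [Finset.mem_product, Finset.mem_filter, Finset.mem_univ, true_and]
    refine ⟨⟨rep_split1 k p hrep, hEqr.1, ?_⟩, rep_split2 k p hrep hsplit, hEqr.2⟩
    intro i hi
    have hival : i.val = k.val := by simpa using hi
    have he : e1 k i = k := Fin.ext (by rw [e1_val, hival])
    show min (p (e1 k i)).val k.val = 0
    rw [he, h0]
    omega
  · intro qr hqr
    simp only [Finset.mem_product, Finset.mem_filter, Finset.mem_univ, true_and] at hqr
    obtain ⟨⟨hq, hEq, hirr⟩, hr, hEr⟩ := hqr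
    simp only [Finset.mem_filter, Finset.mem_univ, true_and]
    refine ⟨⟨rep_joinN k hq hr, (hE _ _).mpr ⟨hEq, hEr⟩⟩, ?_, ?_⟩
    · rw [joinN_apply_le k qr.1 qr.2 k le_rfl, e1_val]
      exact hirr _ (by simp)
    · intro i hi
      rw [joinN_apply_gt k qr.1 qr.2 i (by omega), e2_val]
      omega
  · intro p hp
    simp only [Finset.mem_filter, Finset.mem_univ, true_and] at hp
    exact joinN_split k p hp.1.1 hp.2.2
  · intro qr hqr
    exact Prod.ext (split1_joinN k qr.1 qr.2) (split2_joinN k qr.1 qr.2)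
  · intro p hp
    simp only [Finset.mem_filter, Finset.mem_univ, true_and] at hp
    rw [joinN_split k p hp.1.1 hp.2.2]

noncomputable def zm {m : ℕ} (p : Fin (m+1) → Fin (m+1)) : Fin (m+1) :=
  ⟨(Finset.univ.filter (fun i => (p i).val = 0)).sup Fin.val, by
    apply Nat.lt_succ_of_le
    apply Finset.sup_le
    intro i _
    exact Nat.lt_succ_iff.mp i.isLt⟩

lemma zm_zero {m : ℕ} (p : Fin (m+1) → Fin (m+1)) (hrep : IsPartRep p) :
    (p (zm p)).val = 0 := by
  have hne : (Finset.univ.filter (fun i => (p i).val = 0)).Nonempty := by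
    refine ⟨0, ?_⟩
    simp only [Finset.mem_filter, Finset.mem_univ, true_and]
    have := hrep.2 0
    rw [Fin.le_def] at this
    simpa using this
  obtain ⟨b, hb, hsup⟩ := Finset.exists_mem_eq_sup _ hne Fin.val
  have : zm p = b := Fin.ext hsup
  rw [this]
  simp only [Finset.mem_filter] at hb
  exact hb.2

lemma zm_le {m : ℕ} (p : Fin (m+1) → Fin (m+1)) (i : Fin (m+1)) (hi : (p i).val = 0) :
    i.val ≤ (zm p).val := by
  show i.val ≤ (Finset.univ.filter (fun i => (p i).val = 0)).sup Fin.val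
  exact Finset.le_sup (f := Fin.val) (by simp only [Finset.mem_filter, Finset.mem_univ, true_and]; exact hi)

lemma sum_decomp {m : ℕ} (E : ∀ {s : ℕ}, (Fin s → Fin s) → Prop)
    (hE : ∀ {n : ℕ} (k : Fin n) (q : Fin (k.val+1) → Fin (k.val+1))
      (r : Fin (n-1-k.val) → Fin (n-1-k.val)), E (joinN k q r) ↔ E q ∧ E r)
    (hH3 : ∀ {s : ℕ} (p : Fin s → Fin s), IsPartRep p → E p → ∀ k : Fin s,
      (p k).val = 0 → (∀ i : Fin s, (p i).val = 0 → i.val ≤ k.val) →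
      ∀ i : Fin s, k.val < i.val → k.val < (p i).val)
    (κ : (m : ℕ) → (Fin m → A) → ℂ) (a : Fin (m+1) → A) :
    ∑ p ∈ Finset.univ.filter (fun p : Fin (m+1) → Fin (m+1) => IsPartRep p ∧ E p),
      partFunctional κ p a
    = ∑ k : Fin (m+1),
        (∑ q ∈ Finset.univ.filter (fun q : Fin (k.val+1) → Fin (k.val+1) =>
            IsPartRep q ∧ E q ∧ IsIrr q), partFunctional κ q (take k a))
        * (∑ r ∈ Finset.univ.filter (fun r : Fin (m+1-1-k.val) → Fin (m+1-1-k.val) =>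
            IsPartRep r ∧ E r), partFunctional κ r (drop k a)) := by
  rw [← Finset.sum_fiberwise_of_maps_to (g := zm) (t := Finset.univ)
    (fun p _ => Finset.mem_univ _) (partFunctional κ · a)]
  apply Finset.sum_congr rfl
  intro k _
  rw [Finset.filter_filter]
  have hset : Finset.univ.filter
        (fun p : Fin (m+1) → Fin (m+1) => (IsPartRep p ∧ E p) ∧ zm p = k)
      = Finset.univ.filter (fun p : Fin (m+1) → Fin (m+1) =>
          (IsPartRep p ∧ E p) ∧ ((p k).val = 0 ∧
            ∀ i : Fin (m+1), k.val < i.val → k.val < (p i).val)) := by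
    apply Finset.filter_congr
    intro p _
    constructor
    · rintro ⟨⟨hrep, hEp⟩, hzm⟩
      have h0 : (p k).val = 0 := by rw [← hzm]; exact zm_zero p hrep
      refine ⟨⟨hrep, hEp⟩, h0, ?_⟩
      exact hH3 p hrep hEp k h0 (fun i hi => by rw [← hzm]; exact zm_le p i hi)
    · rintro ⟨⟨hrep, hEp⟩, h0, hsp⟩
      refine ⟨⟨hrep, hEp⟩, Fin.ext ?_⟩
      show (Finset.univ.filter (fun i => (p i).val = 0)).sup Fin.val = k.val
      apply le_antisymm
      · apply Finset.sup_le
        intro i hi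
        simp only [Finset.mem_filter, Finset.mem_univ, true_and] at hi
        by_contra hik
        have := hsp i (by omega)
        omega
      · exact Finset.le_sup (f := Fin.val)
          (by simp only [Finset.mem_filter, Finset.mem_univ, true_and]; exact h0)
  rw [hset, sum_slice k E (fun q r => hE k q r), Finset.sum_product]
  rw [Finset.sum_mul_sum]
  apply Finset.sum_congr rfl
  intro q _
  apply Finset.sum_congr rfl
  intro r _
  exact partFunctional_joinN κ k q r a

lemma h3_nc {s : ℕ} (p : Fin s → Fin s) (hrep : IsPartRep p) (hnc : IsNC p) (k : Fin s)
    (h0 : (p k).val = 0) (hmax : ∀ i : Fin s, (p i).val = 0 → i.val ≤ k.val) :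
    ∀ i : Fin s, k.val < i.val → k.val < (p i).val := by
  intro i hi
  by_contra hle
  push_neg at hle
  have hj0 : (p i).val ≠ 0 := fun h => by have := hmax i h; omega
  have hpj : p (p i) = p i := hrep.1 i
  have hs : 0 < s := Nat.pos_of_ne_zero (fun h => (h ▸ i).elim0)
  have hpz : p ⟨0, hs⟩ = ⟨0, hs⟩ := by
    apply Fin.ext
    have := hrep.2 ⟨0, hs⟩
    rw [Fin.le_def] at this
    simp only [Fin.val_mk] at this ⊢
    omega
  have hpkz : p k = ⟨0, hs⟩ := Fin.ext (by simp only [Fin.val_mk]; exact h0)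
  by_cases hjk : (p i).val = k.val
  · have he : p i = k := Fin.ext hjk
    have : (p k).val = k.val := by
      conv_lhs => rw [← he, hpj, he]
    omega
  · have h1 : (⟨0, hs⟩ : Fin s) < p i := by rw [Fin.lt_def]; simp only [Fin.val_mk]; omega
    have h2 : p i < k := by rw [Fin.lt_def]; omega
    have h3 : k < i := by rw [Fin.lt_def]; omega
    have hkey := hnc ⟨0, hs⟩ (p i) k i h1 h2 h3 (by rw [hpz, hpkz]) hpj
    rw [hpz, hpj] at hkey
    have := congrArg Fin.val hkey
    simp only [Fin.val_mk] at this
    omega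

lemma h3_interval {s : ℕ} (p : Fin s → Fin s) (hrep : IsPartRep p) (hiv : IsIntervalPart p)
    (k : Fin s) (h0 : (p k).val = 0) (hmax : ∀ i : Fin s, (p i).val = 0 → i.val ≤ k.val) :
    ∀ i : Fin s, k.val < i.val → k.val < (p i).val := by
  intro i hi
  by_contra hle
  push_neg at hle
  have hj0 : (p i).val ≠ 0 := fun h => by have := hmax i h; omega
  have hpj : p (p i) = p i := hrep.1 i
  have hs : 0 < s := Nat.pos_of_ne_zero (fun h => (h ▸ i).elim0)
  have hpz : p ⟨0, hs⟩ = ⟨0, hs⟩ := by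
    apply Fin.ext
    have := hrep.2 ⟨0, hs⟩
    rw [Fin.le_def] at this
    simp only [Fin.val_mk] at this ⊢
    omega
  have hpkz : p k = ⟨0, hs⟩ := Fin.ext (by simp only [Fin.val_mk]; exact h0)
  have hkey := hiv ⟨0, hs⟩ (p i) k
    (by rw [Fin.le_def]; simp only [Fin.val_mk]; omega)
    (by rw [Fin.le_def]; omega) (by rw [hpz, hpkz])
  rw [hpj, hpz] at hkey
  have := congrArg Fin.val hkey
  simp only [Fin.val_mk] at this
  omega

lemma sum_zero' (E : ∀ {s : ℕ}, (Fin s → Fin s) → Prop)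
    (hE0 : E (fun i : Fin 0 => i))
    (κ : (m : ℕ) → (Fin m → A) → ℂ) (s : ℕ) (hs : s = 0) (b : Fin s → A) :
    ∑ p ∈ Finset.univ.filter (fun p : Fin s → Fin s => IsPartRep p ∧ E p),
      partFunctional κ p b = 1 := by
  subst hs
  have hfil : (Finset.univ.filter (fun p : Fin 0 → Fin 0 => IsPartRep p ∧ E p))
      = {fun i : Fin 0 => i} := by
    ext p
    simp only [Finset.mem_filter, Finset.mem_univ, true_and, Finset.mem_singleton]
    constructor
    · intro _
      funext i
      exact i.elim0
    · rintro rfl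
      exact ⟨⟨fun i => i.elim0, fun i => i.elim0⟩, hE0⟩
  rw [hfil, Finset.sum_singleton, partFunctional]
  have himg : Finset.image (fun i : Fin 0 => i) Finset.univ = ∅ := by simp
  rw [himg, Finset.prod_empty]

lemma partFunctional_const_zero (κ : (m : ℕ) → (Fin m → A) → ℂ) {s : ℕ} (b : Fin (s+1) → A) :
    partFunctional κ (fun _ : Fin (s+1) => (⟨0, Nat.succ_pos s⟩ : Fin (s+1))) b
      = κ (s+1) b := by
  rw [partFunctional]
  have himg : Finset.image (fun _ : Fin (s+1) => (⟨0, Nat.succ_pos s⟩ : Fin (s+1))) Finset.univ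
      = {(⟨0, Nat.succ_pos s⟩ : Fin (s+1))} := by
    ext x
    simp only [Finset.mem_image, Finset.mem_univ, true_and, Finset.mem_singleton]
    exact ⟨fun ⟨i, hi⟩ => hi.symm, fun h => ⟨⟨0, Nat.succ_pos s⟩, h.symm⟩⟩
  rw [himg, Finset.prod_singleton]
  have hfil : Finset.univ.filter
      (fun i : Fin (s+1) => (fun _ : Fin (s+1) => (⟨0, Nat.succ_pos s⟩ : Fin (s+1))) i
        = (⟨0, Nat.succ_pos s⟩ : Fin (s+1)))
      = Finset.univ := by
    apply Finset.filter_true_of_mem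
    intro i _
    rfl
  refine (partFactor_congr κ _ _ hfil b).trans ?_
  have hc : (Finset.univ : Finset (Fin (s+1))).card = s + 1 := by simp
  apply kappaCongr κ hc
  intro j
  have key := Finset.orderEmbOfFin_unique
    (s := (Finset.univ : Finset (Fin (s+1)))) rfl
    (f := fun x : Fin (Finset.univ : Finset (Fin (s+1))).card => Fin.cast hc x)
    (fun x => Finset.mem_univ _)
    (fun x y hxy => by rw [Fin.lt_def] at hxy ⊢; exact hxy)
  have h2 := congrFun key (Fin.cast hc.symm j)
  rw [← h2]
  exact congrArg b (Fin.ext rfl)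

lemma sum_interval_irr (β : (m : ℕ) → (Fin m → A) → ℂ) {s : ℕ} (b : Fin (s+1) → A) :
    ∑ q ∈ Finset.univ.filter (fun q : Fin (s+1) → Fin (s+1) =>
        IsPartRep q ∧ IsIntervalPart q ∧ IsIrr q), partFunctional β q b
      = β (s+1) b := by
  have hfil : Finset.univ.filter (fun q : Fin (s+1) → Fin (s+1) =>
        IsPartRep q ∧ IsIntervalPart q ∧ IsIrr q)
      = {fun _ => (⟨0, Nat.succ_pos s⟩ : Fin (s+1))} := by
    ext q
    simp only [Finset.mem_filter, Finset.mem_univ, true_and, Finset.mem_singleton]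
    constructor
    · rintro ⟨hrep, hiv, hirr⟩
      funext i
      have h0 : (q ⟨0, Nat.succ_pos s⟩).val = 0 := by
        have := hrep.2 ⟨0, Nat.succ_pos s⟩
        rw [Fin.le_def] at this
        simp only [Fin.val_mk] at this
        omega
      have hlast : (q ⟨s, Nat.lt_succ_self s⟩).val = 0 := hirr _ (by simp)
      have := hiv ⟨0, Nat.succ_pos s⟩ i ⟨s, Nat.lt_succ_self s⟩
        (by rw [Fin.le_def]; simp only [Fin.val_mk]; omega)
        (by rw [Fin.le_def]; simp only [Fin.val_mk]; exact Nat.lt_succ_iff.mp i.isLt)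
        (Fin.ext (by rw [h0, hlast]))
      rw [this]
      apply Fin.ext
      exact h0
    · rintro rfl
      refine ⟨⟨fun i => rfl, fun i => by rw [Fin.le_def]; simp only [Fin.val_mk]; omega⟩,
        fun i j k _ _ _ => rfl, fun i _ => rfl⟩
  rw [hfil, Finset.sum_singleton, partFunctional_const_zero]

lemma take_last {m : ℕ} (a : Fin (m+1) → A) : take (Fin.last m) a = a := by
  funext j
  show a (e1 (Fin.last m) j) = a j
  congr 1

end BF

open BF in
theorem free_eq_interval_sum' {A : Type*} [Ring A] (φ : A → ℂ)
    (κ β : (m : ℕ) → (Fin m → A) → ℂ)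
    (hκ : IsFreeCumulantSeq φ κ) (hβ : IsBooleanCumulantSeq φ β) (s : ℕ) (b : Fin s → A) :
    ∑ p ∈ Finset.univ.filter (fun p : Fin s → Fin s => IsPartRep p ∧ IsNC p),
      partFunctional κ p b
      = ∑ p ∈ Finset.univ.filter (fun p : Fin s → Fin s => IsPartRep p ∧ IsIntervalPart p),
          partFunctional β p b := by
  cases s with
  | zero =>
    rw [sum_zero' (fun {s} p => IsNC p) (fun i => i.elim0) κ 0 rfl b,
        sum_zero' (fun {s} p => IsIntervalPart p) (fun i => i.elim0) β 0 rfl b]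
  | succ t => rw [← hκ (t+1) t.succ_pos b, ← hβ (t+1) t.succ_pos b]

open BF in
/-- Boolean cumulants are expressed in terms of free cumulants by
`β_n(a₁,…,aₙ) = ∑_{π ∈ NC_irr(n)} κ_π(a₁,…,aₙ)`, the sum being over irreducible
noncrossing partitions, i.e. those in which `1` and `n` lie in the same block
(in the min-of-block representation: `p` maps the last element to `0`). -/
theorem boolean_cumulant_eq_sum_irreducible_free_cumulants
    {A : Type*} [Ring A] (φ : A → ℂ)
    (κ β : (m : ℕ) → (Fin m → A) → ℂ)
    (hκ : IsFreeCumulantSeq φ κ) (hβ : IsBooleanCumulantSeq φ β)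
    (m : ℕ) (a : Fin (m + 1) → A) :
    β (m + 1) a =
      ∑ p ∈ Finset.univ.filter
          (fun p : Fin (m + 1) → Fin (m + 1) =>
            IsPartRep p ∧ IsNC p ∧ p (Fin.last m) = 0),
        partFunctional κ p a := by
  have hconv : ∀ (M : ℕ) (a : Fin (M+1) → A),
      β (M+1) a = ∑ q ∈ Finset.univ.filter (fun q : Fin (M+1) → Fin (M+1) =>
        IsPartRep q ∧ IsNC q ∧ IsIrr q), partFunctional κ q a := by
    intro M
    induction M using Nat.strong_induction_on with
    | _ M IH =>
      intro a
      have eq1 := hκ (M+1) (Nat.succ_pos M) a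
      rw [sum_decomp (fun {s} p => IsNC p) (fun k q r => nc_joinN_iff k q r)
        (fun p h1 h2 => h3_nc p h1 h2) κ a] at eq1
      have eq2 := hβ (M+1) (Nat.succ_pos M) a
      rw [sum_decomp (fun {s} p => IsIntervalPart p) (fun k q r => interval_joinN_iff k q r)
        (fun p h1 h2 => h3_interval p h1 h2) β a] at eq2
      have eq2' : φ (List.ofFn a).prod = ∑ k : Fin (M+1),
          β (k.val+1) (take k a) *
          (∑ r ∈ Finset.univ.filter (fun r : Fin (M+1-1-k.val) → Fin (M+1-1-k.val) =>
            IsPartRep r ∧ IsNC r), partFunctional κ r (drop k a)) := by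
        rw [eq2]
        apply Finset.sum_congr rfl
        intro k _
        rw [sum_interval_irr β (take k a)]
        rw [free_eq_interval_sum' φ κ β hκ hβ (M+1-1-k.val) (drop k a)]
      have key := eq1.symm.trans eq2'
      rw [Fin.sum_univ_castSucc, Fin.sum_univ_castSucc] at key
      have hsame : ∀ j : Fin M,
          (∑ q ∈ Finset.univ.filter (fun q : Fin ((Fin.castSucc j).val+1) →
              Fin ((Fin.castSucc j).val+1) => IsPartRep q ∧ IsNC q ∧ IsIrr q),
            partFunctional κ q (take (Fin.castSucc j) a)) *
          (∑ r ∈ Finset.univ.filter (fun r : Fin (M+1-1-(Fin.castSucc j).val) →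
              Fin (M+1-1-(Fin.castSucc j).val) => IsPartRep r ∧ IsNC r),
            partFunctional κ r (drop (Fin.castSucc j) a))
          = β ((Fin.castSucc j).val+1) (take (Fin.castSucc j) a) *
          (∑ r ∈ Finset.univ.filter (fun r : Fin (M+1-1-(Fin.castSucc j).val) →
              Fin (M+1-1-(Fin.castSucc j).val) => IsPartRep r ∧ IsNC r),
            partFunctional κ r (drop (Fin.castSucc j) a)) := by
        intro j
        have := IH j.val j.isLt (take (Fin.castSucc j) a)
        exact congrArg (fun z => z * _) this.symm
      rw [Finset.sum_congr rfl (fun j _ => hsame j)] at key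
      have hlast := add_left_cancel key
      have hzero : (∑ r ∈ Finset.univ.filter
          (fun r : Fin (M+1-1-(Fin.last M).val) → Fin (M+1-1-(Fin.last M).val) =>
            IsPartRep r ∧ IsNC r), partFunctional κ r (drop (Fin.last M) a)) = 1 := by
        apply sum_zero' (fun {s} p => IsNC p) (fun i => i.elim0) κ
        rw [Fin.val_last]
        omega
      rw [hzero, mul_one, mul_one, take_last] at hlast
      exact hlast.symm
  rw [hconv m a]
  apply Finset.sum_congr _ (fun p _ => rfl)
  apply Finset.filter_congr
  intro p _
  constructor
  · rintro ⟨h1, h2, h3⟩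
    exact ⟨h1, h2, Fin.ext (h3 (Fin.last m) (by simp))⟩
  · rintro ⟨h1, h2, h3⟩
    refine ⟨h1, h2, fun i hi => ?_⟩
    have : i = Fin.last m := Fin.ext (by simpa using hi)
    rw [this, h3]
    rfl
end

section
/- Let A be a finite von Neumann algebra, B ⊆ A a von Neumann subalgebra, and E the conditional expectation onto B. For any normal element X ∈ A, the spectrum of E[X|B] is contained in the closed convex hull of the spectrum of X. -/
set_option maxHeartbeats 1000000


/-- Lemma 4.3. Let `A` be a finite von Neumann algebra (here: a
unital C*-algebra with a faithful tracial state `φ`), `B ⊆ A` a von Neumann subalgebra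
and `E` the φ-preserving conditional expectation onto `B`. Then for any normal element
`X ∈ A`, the spectrum of `E[X|B]` is contained in the closed convex hull of the
spectrum of `X`. -/
theorem spectrum_conditional_expectation_subset_closed_convexHull
    {A : Type*} [NormedRing A] [StarRing A] [CStarRing A] [NormedAlgebra ℂ A]
    [StarModule ℂ A] [CompleteSpace A]
    (φ : A → ℂ) (hφ1 : φ 1 = 1) (hφb : ∀ a : A, ‖φ a‖ ≤ ‖a‖)
    (htrace : ∀ a b : A, φ (a * b) = φ (b * a))
    (hfaithful : ∀ a : A, φ (star a * a) = 0 → a = 0)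
    (B : Subalgebra ℂ A) (hBstar : ∀ b ∈ B, star b ∈ B)
    (E : A →ₗ[ℂ] A)
    (hEmem : ∀ a, E a ∈ B) (hEid : ∀ b ∈ B, E b = b)
    (hEmod : ∀ b₁ ∈ B, ∀ b₂ ∈ B, ∀ a, E (b₁ * a * b₂) = b₁ * E a * b₂)
    (hEφ : ∀ a, φ (E a) = φ a)
    (hEstar : ∀ a, E (star a) = star (E a))
    (hEpos : ∀ a, ∃ b, E (star a * a) = star b * b)
    (X : A) (hX : IsStarNormal X) :
    spectrum ℂ (E X) ⊆ closure (convexHull ℝ (spectrum ℂ X)) := by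
  classical
  -- `A` is nontrivial
  haveI : Nontrivial A := ⟨⟨1, 0, fun h => by
    have := hφb 1
    rw [hφ1, h] at this
    norm_num at this⟩⟩
  -- bundle the C*-algebra structure
  letI : CStarAlgebra A :=
    { ‹NormedRing A›, ‹StarRing A›, ‹CStarRing A›, ‹CompleteSpace A›,
      ‹NormedAlgebra ℂ A›, ‹StarModule ℂ A› with }
  -- introduce the spectral order
  letI : PartialOrder A := CStarAlgebra.spectralOrder A
  haveI : StarOrderedRing A := CStarAlgebra.spectralOrderedRing A
  -- `E` preserves positivity
  have Epos : ∀ x : A, 0 ≤ x → 0 ≤ E x := by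
    intro x hx
    rw [StarOrderedRing.nonneg_iff] at hx ⊢
    induction hx using AddSubmonoid.closure_induction with
    | mem y hy =>
      obtain ⟨s, rfl⟩ := hy
      obtain ⟨b, hb⟩ := hEpos s
      exact hb ▸ AddSubmonoid.subset_closure ⟨b, rfl⟩
    | zero => simpa using AddSubmonoid.zero_mem _
    | add x y _ _ hx hy =>
      rw [map_add]
      exact AddSubmonoid.add_mem _ hx hy
  have Emono : ∀ x y : A, x ≤ y → E x ≤ E y := by
    intro x y h
    have := Epos (y - x) (sub_nonneg.mpr h)
    rw [map_sub] at this
    exact sub_nonneg.mp this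
  have hEalg : ∀ z : ℂ, E (algebraMap ℂ A z) = algebraMap ℂ A z := fun z =>
    hEid _ (B.algebraMap_mem z)
  have hEalgR : ∀ r : ℝ, E (algebraMap ℝ A r) = algebraMap ℝ A r := by
    intro r
    rw [IsScalarTower.algebraMap_apply ℝ ℂ A r]
    exact hEalg _
  -- `E` is contractive
  have hEcontr : ∀ a : A, ‖E a‖ ≤ ‖a‖ := by
    intro a
    set b := E a with hb
    have hbB : b ∈ B := hEmem a
    have h1 : E (star a * b) = star b * b := by
      have := hEmod 1 B.one_mem b hbB (star a)
      simpa [hEstar a] using this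
    have h2 : E (star b * a) = star b * b := by
      have := hEmod (star b) (hBstar b hbB) 1 B.one_mem a
      simpa using this
    have h3 : E (star b * b) = star b * b := hEid _ (B.mul_mem (hBstar b hbB) hbB)
    obtain ⟨s, hs⟩ := hEpos (a - b)
    have hexp : star (a - b) * (a - b)
        = star a * a - star a * b - star b * a + star b * b := by
      rw [star_sub]
      noncomm_ring
    have hkey : E (star a * a) - star b * b = star s * s := by
      rw [← hs, hexp]
      rw [map_add, map_sub, map_sub, h1, h2, h3]
      abel
    have hle1 : star b * b ≤ E (star a * a) := by
      rw [← sub_nonneg, hkey]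
      exact star_mul_self_nonneg s
    have hle2 : E (star a * a) ≤ algebraMap ℝ A ‖star a * a‖ := by
      have h4 : star a * a ≤ algebraMap ℝ A ‖star a * a‖ :=
        IsSelfAdjoint.le_algebraMap_norm_self (IsSelfAdjoint.star_mul_self a)
      calc E (star a * a) ≤ E (algebraMap ℝ A ‖star a * a‖) := Emono _ _ h4
        _ = algebraMap ℝ A ‖star a * a‖ := hEalgR _
    have h5 : ‖star b * b‖ ≤ ‖algebraMap ℝ A ‖star a * a‖‖ :=
      CStarAlgebra.norm_le_norm_of_nonneg_of_le (star_mul_self_nonneg b) (hle1.trans hle2)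
    have h6 : ‖algebraMap ℝ A ‖star a * a‖‖ = ‖star a * a‖ := by
      rw [norm_algebraMap']
      exact norm_norm _
    have h7 : ‖b‖ * ‖b‖ ≤ ‖a‖ * ‖a‖ := by
      calc ‖b‖ * ‖b‖ = ‖star b * b‖ := (CStarRing.norm_star_mul_self).symm
        _ ≤ ‖algebraMap ℝ A ‖star a * a‖‖ := h5
        _ = ‖star a * a‖ := h6
        _ = ‖a‖ * ‖a‖ := CStarRing.norm_star_mul_self
    nlinarith [norm_nonneg b, norm_nonneg a]
  -- shifts of `X` are normal
  have hYnormal : ∀ μ : ℂ, IsStarNormal (X - algebraMap ℂ A μ) := by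
    intro μ
    constructor
    have e1 : star (X - algebraMap ℂ A μ) = star X - algebraMap ℂ A (star μ) := by
      rw [star_sub, algebraMap_star_comm]
    have hc : Commute (star X - algebraMap ℂ A (star μ)) (X - algebraMap ℂ A μ) :=
      Commute.sub_left
        ((hX.star_comm_self).sub_right (Algebra.commute_algebraMap_right _ _))
        (Algebra.commute_algebraMap_left _ _)
    exact e1 ▸ hc
  -- key inequality: for each center `μ`, some point of the spectrum of `X` is
  -- at least as far from `μ` as any point of the spectrum of `E X`.
  have key : ∀ μ : ℂ, ∃ z ∈ spectrum ℂ X, ∀ l ∈ spectrum ℂ (E X), ‖l - μ‖ ≤ ‖z - μ‖ := by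
    intro μ
    haveI : IsStarNormal (X - algebraMap ℂ A μ) := hYnormal μ
    obtain ⟨w, hw, hwr⟩ := spectrum.exists_nnnorm_eq_spectralRadius (a := X - algebraMap ℂ A μ)
    rw [← spectrum.sub_singleton_eq, Set.mem_sub] at hw
    obtain ⟨z, hz, m, hm, hw'⟩ := hw
    rw [Set.mem_singleton_iff] at hm
    rw [hm] at hw'
    rw [← hw'] at hwr
    refine ⟨z, hz, fun l hl => ?_⟩
    have hnorm : ‖X - algebraMap ℂ A μ‖ = ‖z - μ‖ := by
      have h := hwr.trans (IsStarNormal.spectralRadius_eq_nnnorm (X - algebraMap ℂ A μ))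
      have h2 : ‖z - μ‖₊ = ‖X - algebraMap ℂ A μ‖₊ := by exact_mod_cast h
      have h3 := congrArg NNReal.toReal h2.symm
      simpa using h3
    have hl' : l - μ ∈ spectrum ℂ (E X - algebraMap ℂ A μ) := by
      rw [← spectrum.sub_singleton_eq]
      exact Set.sub_mem_sub hl rfl
    have hEY : E (X - algebraMap ℂ A μ) = E X - algebraMap ℂ A μ := by
      rw [map_sub, hEalg]
    calc ‖l - μ‖ ≤ ‖E X - algebraMap ℂ A μ‖ := spectrum.norm_le_norm_of_mem hl'
      _ = ‖E (X - algebraMap ℂ A μ)‖ := by rw [hEY]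
      _ ≤ ‖X - algebraMap ℂ A μ‖ := hEcontr _
      _ = ‖z - μ‖ := hnorm
  -- now the convexity argument
  intro l hl
  by_contra hlK
  have hKconv : Convex ℝ (closure (convexHull ℝ (spectrum ℂ X))) :=
    (convex_convexHull ℝ _).closure
  obtain ⟨f, u, hfl, hfK⟩ :=
    geometric_hahn_banach_point_closed hKconv isClosed_closure hlK
  set d := u - f l with hd
  have hdpos : 0 < d := sub_pos.mpr hfl
  have hspecK : spectrum ℂ X ⊆ closure (convexHull ℝ (spectrum ℂ X)) :=
    (subset_convexHull ℝ _).trans subset_closure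
  have hfz : ∀ z ∈ spectrum ℂ X, d ≤ f z - f l := by
    intro z hz
    have := hfK z (hspecK hz)
    rw [hd]
    linarith
  set c1 := f 1 with hc1
  set c2 := f Complex.I with hc2
  have hf : ∀ w : ℂ, f w = w.re * c1 + w.im * c2 := by
    intro w
    have hw : w = w.re • (1 : ℂ) + w.im • Complex.I := by
      simp [Complex.real_smul]
    conv_lhs => rw [hw]
    rw [map_add, map_smul, map_smul]
    simp [smul_eq_mul]
    rfl
  set D := ‖X‖ + ‖l‖ with hD
  have hD0 : 0 ≤ D := by positivity
  have hDz : ∀ z ∈ spectrum ℂ X, ‖z - l‖ ≤ D := by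
    intro z hz
    exact (norm_sub_le _ _).trans (add_le_add_left (spectrum.norm_le_norm_of_mem hz) _)
  set t := (D ^ 2 + 1) / (2 * d) with ht
  have htpos : 0 < t := by positivity
  have h2td : 2 * t * d = D ^ 2 + 1 := by
    rw [ht]
    field_simp
  set μ := l + (t : ℂ) * ((c1 : ℂ) + (c2 : ℂ) * Complex.I) with hμdef
  obtain ⟨z, hz, hzl⟩ := key μ
  have h1 := hzl l hl
  -- squared-norm formula
  have hns : ∀ w : ℂ, ‖w‖ ^ 2 = w.re ^ 2 + w.im ^ 2 := by
    intro w
    rw [Complex.sq_norm, Complex.normSq_apply]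
    ring
  set a1 := (z - l).re with ha1
  set a2 := (z - l).im with ha2
  have hlμ : l - μ = -((t : ℂ) * ((c1 : ℂ) + (c2 : ℂ) * Complex.I)) := by
    rw [hμdef]; ring
  have hlre : (l - μ).re = -(t * c1) := by rw [hlμ]; simp
  have hlim : (l - μ).im = -(t * c2) := by rw [hlμ]; simp
  have hzμ : z - μ = (z - l) - (t : ℂ) * ((c1 : ℂ) + (c2 : ℂ) * Complex.I) := by
    rw [hμdef]; ring
  have hzre : (z - μ).re = a1 - t * c1 := by rw [hzμ, ha1]; simp
  have hzim : (z - μ).im = a2 - t * c2 := by rw [hzμ, ha2]; simp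
  have hineq : t ^ 2 * c1 ^ 2 + t ^ 2 * c2 ^ 2 ≤ (a1 - t * c1) ^ 2 + (a2 - t * c2) ^ 2 := by
    have h2 : ‖l - μ‖ ^ 2 ≤ ‖z - μ‖ ^ 2 := by
      nlinarith [h1, norm_nonneg (l - μ), norm_nonneg (z - μ)]
    rw [hns, hns, hlre, hlim, hzre, hzim] at h2
    nlinarith [h2]
  have hdz' : d ≤ a1 * c1 + a2 * c2 := by
    have h := hfz z hz
    rw [hf z, hf l] at h
    have ha1' : a1 = z.re - l.re := by rw [ha1]; simp
    have ha2' : a2 = z.im - l.im := by rw [ha2]; simp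
    rw [ha1', ha2']
    nlinarith [h]
  have hzD' : a1 ^ 2 + a2 ^ 2 ≤ D ^ 2 := by
    have h := hDz z hz
    have h' := hns (z - l)
    nlinarith [norm_nonneg (z - l)]
  have hm : 2 * t * d ≤ 2 * t * (a1 * c1 + a2 * c2) := by
    nlinarith [hdz', htpos]
  have hfin : 2 * t * d ≤ D ^ 2 := by
    nlinarith [hineq, hzD', hm]
  linarith [h2td, hfin]
end

section
/- Let X, Y be self-adjoint bounded free random variables with X having distribution μ, and f a bounded Borel function. Then G_{X+f(X)Yf*(X)}(z) = ∫_ℝ 1/(z - x - δ(z)|f(x)|²) dμ(x), where δ(z) is the subordination function satisfying E[(z-X-f(X)Yf*(X))^{-1}|X] = (z-X-δ(z)f(X)f*(X))^{-1}. -/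
open MeasureTheory
open scoped BigOperators
open scoped ENNReal NNReal

/-- Free independence of two subalgebras of `(A, φ)`. -/
def FreePair {A : Type*} [Ring A] [Algebra ℂ A] (φ : A → ℂ)
    (B C : Subalgebra ℂ A) : Prop :=
  ∀ (n : ℕ) (a : Fin n → A) (f : Fin n → Bool), 0 < n →
    (∀ i, a i ∈ (bif f i then B else C)) →
    (∀ i, φ (a i) = 0) →
    (∀ i j : Fin n, (i : ℕ) + 1 = (j : ℕ) → f i ≠ f j) →
    φ (List.ofFn a).prod = 0

set_option maxHeartbeats 1000000 in
lemma resolvent_exp_ne_zero {A : Type*} [CStarAlgebra A] [Nontrivial A]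
    (φ : A → ℂ) (hφb : ∀ a : A, ‖φ a‖ ≤ ‖a‖)
    (E : A →ₗ[ℂ] A) (hE1 : E 1 = 1) (hEφ : ∀ a, φ (E a) = φ a)
    (hφsc : ∀ c : ℂ, φ (c • (1 : A)) = c)
    (T : A) (hT : IsSelfAdjoint T) (z : ℂ) (hz : 0 < z.im)
    (hEr : E (Ring.inverse (z • (1 : A) - T)) = 0) : False := by
  classical
  set u : A := z • (1 : A) - T with hu
  have hu_eq : u = algebraMap ℂ A z - T := by
    rw [hu, Algebra.algebraMap_eq_smul_one]
  have hznot : z ∉ spectrum ℂ T := by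
    intro hmem
    have h1 := hT.mem_spectrum_eq_re hmem
    rw [h1] at hz
    simp at hz
  have hUnit : IsUnit u := hu_eq ▸ spectrum.notMem_iff.mp hznot
  set r : A := Ring.inverse u with hr
  have hur : u * r = 1 := Ring.mul_inverse_cancel u hUnit
  have hru : r * u = 1 := Ring.inverse_mul_cancel u hUnit
  have hrU : r = ↑(hUnit.unit⁻¹) := by
    have h := Ring.inverse_unit hUnit.unit
    rw [hUnit.unit_spec] at h
    exact h
  have hrUnit : IsUnit r := hrU ▸ (hUnit.unit⁻¹).isUnit
  -- normality of u
  have hstaru : star u = (starRingEnd ℂ z) • (1 : A) - T := by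
    rw [hu, star_sub, star_smul, star_one, hT.star_eq]
    rfl
  have hcomm_u : star u * u = u * star u := by
    rw [hu, hstaru]
    simp only [sub_mul, mul_sub, smul_mul_assoc, mul_smul_comm, one_mul, mul_one, smul_smul,
      smul_sub]
    rw [mul_comm ((starRingEnd ℂ) z) z]
    abel
  -- r commutes with star u
  have hcomm_ru : r * star u = star u * r := by
    calc r * star u = r * star u * (u * r) := by rw [hur, mul_one]
      _ = r * (star u * u) * r := by noncomm_ring
      _ = r * (u * star u) * r := by rw [hcomm_u]
      _ = (r * u) * (star u * r) := by noncomm_ring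
      _ = star u * r := by rw [hru, one_mul]
  -- star r commutes with u
  have hcomm_sru : star r * u = u * star r := by
    have h := congrArg star hcomm_ru
    simpa only [star_mul, star_star] using h.symm
  -- r is normal
  have hnormal_r : star r * r = r * star r := by
    have h1 : u * (star r * r) = star r := by
      calc u * (star r * r) = (u * star r) * r := by noncomm_ring
        _ = (star r * u) * r := by rw [hcomm_sru]
        _ = star r * (u * r) := by noncomm_ring
        _ = star r := by rw [hur, mul_one]
    have h2 : u * (r * star r) = star r := by
      calc u * (r * star r) = (u * r) * star r := by noncomm_ring
        _ = star r := by rw [hur, one_mul]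
    exact hUnit.mul_left_cancel (by rw [h1, h2])
  -- spectrum bounds for r
  set β : ℝ := z.im / (‖u‖ + 1) ^ 2 with hβ
  have hu1pos : (0:ℝ) < ‖u‖ + 1 := by positivity
  have hβpos : 0 < β := by positivity
  have hspec : ∀ s ∈ spectrum ℂ r, ‖s‖ ≤ ‖r‖ ∧ s.im ≤ -β := by
    intro s hs
    refine ⟨spectrum.norm_le_norm_of_mem hs, ?_⟩
    have hs0 : s ≠ 0 := by
      intro h0
      exact spectrum.zero_notMem ℂ hrUnit (h0 ▸ hs)
    -- s⁻¹ ∈ spectrum u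
    have hζ : s⁻¹ ∈ spectrum ℂ u := by
      rw [spectrum.mem_iff]
      intro hunit
      have hident : algebraMap ℂ A s - r = (-s) • (r * (algebraMap ℂ A s⁻¹ - u)) := by
        rw [mul_sub]
        have h3 : r * algebraMap ℂ A s⁻¹ = s⁻¹ • r := by
          rw [← Algebra.commutes s⁻¹ r, ← Algebra.smul_def]
        rw [h3, hru, smul_sub, smul_smul, neg_mul, mul_inv_cancel₀ hs0,
          Algebra.algebraMap_eq_smul_one]
        simp only [neg_smul, one_smul]
        abel
      have : IsUnit (algebraMap ℂ A s - r) := by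
        rw [hident, Algebra.smul_def]
        exact ((algebraMap ℂ A).isUnit_map (neg_ne_zero.mpr hs0).isUnit).mul
          (hrUnit.mul hunit)
      exact spectrum.mem_iff.mp hs this
    have hζnorm : ‖s⁻¹‖ ≤ ‖u‖ := spectrum.norm_le_norm_of_mem hζ
    -- z - s⁻¹ ∈ spectrum T, hence real
    have ht : z - s⁻¹ ∈ spectrum ℂ T := by
      rw [spectrum.mem_iff]
      intro hunit
      apply spectrum.notMem_iff.mpr _ hζ
      have : algebraMap ℂ A s⁻¹ - u = -(algebraMap ℂ A (z - s⁻¹) - T) := by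
        rw [hu_eq, map_sub]
        abel
      rw [this]
      exact hunit.neg
    have htre : (z - s⁻¹).im = 0 := by
      have h4 := hT.mem_spectrum_eq_re ht
      rw [h4]
      exact Complex.ofReal_im _
    have hζim : (s⁻¹).im = z.im := by
      have : z.im - (s⁻¹).im = 0 := by
        simpa [Complex.sub_im] using htre
      linarith
    have hζne : s⁻¹ ≠ 0 := by
      intro h0
      rw [h0] at hζim
      simp at hζim
      linarith [hζim ▸ hz]
    have hnormSqpos : 0 < Complex.normSq s⁻¹ := Complex.normSq_pos.mpr hζne
    have hnormSqle : Complex.normSq s⁻¹ ≤ (‖u‖ + 1) ^ 2 := by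
      rw [Complex.normSq_eq_norm_sq]
      nlinarith [norm_nonneg (s⁻¹), hζnorm]
    have hsim : s.im = -z.im / Complex.normSq s⁻¹ := by
      conv_lhs => rw [← inv_inv s]
      rw [Complex.inv_im, hζim]
    rw [hsim, hβ]
    rw [neg_div, neg_le_neg_iff]
    exact div_le_div_of_nonneg_left (le_of_lt hz) hnormSqpos hnormSqle
  -- choose R large
  set R : ℝ := ‖r‖ + β + (‖r‖ ^ 2 + β ^ 2 + 1) / (2 * β) with hR
  have hfrac : 0 < (‖r‖ ^ 2 + β ^ 2 + 1) / (2 * β) := by positivity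
  have hRr : ‖r‖ ≤ R := by rw [hR]; linarith
  have hRpos : 0 < R := lt_of_le_of_lt (norm_nonneg r) (by rw [hR]; linarith)
  have hRβ : β ≤ R := by rw [hR]; linarith [norm_nonneg r]
  have hRkey : ‖r‖ ^ 2 + β ^ 2 < 2 * β * R := by
    have h2β : (0:ℝ) < 2 * β := by linarith
    have hfrac2 : 2 * β * ((‖r‖ ^ 2 + β ^ 2 + 1) / (2 * β)) = ‖r‖ ^ 2 + β ^ 2 + 1 := by
      field_simp
    have hexp : 2 * β * R = 2 * β * ‖r‖ + 2 * β * β + (‖r‖ ^ 2 + β ^ 2 + 1) := by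
      rw [hR, mul_add, mul_add, hfrac2]
    nlinarith [norm_nonneg r]
  set c : ℂ := Complex.I * (R : ℂ) with hc
  have hcre : c.re = 0 := by simp [hc]
  have hcim : c.im = R := by simp [hc]
  set a : A := r + c • (1 : A) with ha
  have hEa : E a = c • (1 : A) := by rw [ha, map_add, hEr, zero_add, _root_.map_smul, hE1]
  have hφa : φ a = c := by rw [← hEφ a, hEa, hφsc]
  have hRa : R ≤ ‖a‖ := by
    have h5 := hφb a
    rw [hφa] at h5
    have : ‖c‖ = R := by
      rw [hc]
      simp [abs_of_pos hRpos]
    linarith [this ▸ h5]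
  -- a is normal
  have hnormal_a : star a * a = a * star a := by
    rw [ha]
    simp only [star_add, star_smul, star_one, add_mul, mul_add, smul_add, smul_mul_assoc,
      mul_smul_comm, mul_one, one_mul, smul_smul]
    rw [hnormal_r, mul_comm (star c) c]
    abel
  haveI hna : IsStarNormal a := ⟨hnormal_a⟩
  -- spectral bound
  set C : ℝ := Real.sqrt (‖r‖ ^ 2 + (R - β) ^ 2) with hC
  have hC0 : 0 ≤ C := Real.sqrt_nonneg _
  have hC2 : C ^ 2 = ‖r‖ ^ 2 + (R - β) ^ 2 := Real.sq_sqrt (by positivity)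
  have hspeca : ∀ k ∈ spectrum ℂ a, ‖k‖ ≤ C := by
    intro k hk
    have hk' : k - c ∈ spectrum ℂ r := by
      rw [spectrum.mem_iff] at hk ⊢
      intro hunit
      apply hk
      have h6 : algebraMap ℂ A k - a = algebraMap ℂ A (k - c) - r := by
        rw [map_sub, ha, Algebra.algebraMap_eq_smul_one c]
        abel
      rw [h6]
      exact hunit
    obtain ⟨hn1, hn2⟩ := hspec _ hk'
    have hre : |(k - c).re| ≤ ‖r‖ := le_trans (Complex.abs_re_le_norm _) hn1
    have him : |(k - c).im| ≤ ‖r‖ := le_trans (Complex.abs_im_le_norm _) hn1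
    have hre' : (k.re) = (k - c).re := by simp [Complex.sub_re, hcre]
    have him' : (k.im) = (k - c).im + R := by simp [Complex.sub_im, hcim]
    have hks : ‖k‖ = Real.sqrt (k.re ^ 2 + k.im ^ 2) := by
      rw [Complex.norm_def, Complex.normSq_apply]
      ring_nf
    rw [hks, hC]
    apply Real.sqrt_le_sqrt
    have h7 := abs_le.mp hre
    have h8 := abs_le.mp him
    have h9 : 0 ≤ k.im := by rw [him']; linarith
    have h10 : k.im ≤ R - β := by rw [him']; linarith
    have e1 : k.re ^ 2 ≤ ‖r‖ ^ 2 := by rw [hre']; nlinarith [h7.1, h7.2]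
    have e2 : k.im ^ 2 ≤ (R - β) ^ 2 := by nlinarith [h9, h10]
    linarith
  have hnorm_a : ‖a‖ ≤ C := by
    have h1 : spectralRadius ℂ a = ‖a‖₊ := IsStarNormal.spectralRadius_eq_nnnorm a
    have h2 : spectralRadius ℂ a ≤ (C.toNNReal : ℝ≥0∞) := by
      refine iSup₂_le fun k hk => ?_
      rw [ENNReal.coe_le_coe, ← NNReal.coe_le_coe, coe_nnnorm, Real.coe_toNNReal C hC0]
      exact hspeca k hk
    rw [h1, ENNReal.coe_le_coe, ← NNReal.coe_le_coe, coe_nnnorm,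
      Real.coe_toNNReal C hC0] at h2
    exact h2
  have hfin : R ≤ C := le_trans hRa hnorm_a
  nlinarith [hC2, hRkey, hC0, hβpos, hRpos, hfin]

/-- Corollary 1.5. Let `X, Y` be self-adjoint bounded free random
variables, `X` with spectral distribution `μ`, and `f` a bounded function, with
`f(X) = cfc f X`.  If `δ` is the subordination function satisfying
`E[(z - X - f(X) Y f*(X))⁻¹ | B] = (z - X - δ(z) f(X) f*(X))⁻¹` on `ℂ⁺` (where `B` is a
subalgebra containing `X` from which `Y` is free, with conditional expectation `E`),
then `G_{X + f(X) Y f*(X)}(z) = ∫_ℝ (z - x - δ(z) |f(x)|²)⁻¹ dμ(x)` on `ℂ⁺`. -/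
theorem cauchy_transform_of_X_plus_fXYfX
    {A : Type*} [CStarAlgebra A]
    (φ : A → ℂ) (hφ1 : φ 1 = 1) (hφb : ∀ a : A, ‖φ a‖ ≤ ‖a‖)
    (htrace : ∀ a b : A, φ (a * b) = φ (b * a))
    (B : Subalgebra ℂ A) (E : A →ₗ[ℂ] A)
    (hEmem : ∀ a, E a ∈ B) (hEid : ∀ b ∈ B, E b = b)
    (hEmod : ∀ b₁ ∈ B, ∀ b₂ ∈ B, ∀ a, E (b₁ * a * b₂) = b₁ * E a * b₂)
    (hEφ : ∀ a, φ (E a) = φ a)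
    (X Y : A) (hXsa : IsSelfAdjoint X) (hYsa : IsSelfAdjoint Y)
    (hX : X ∈ B) (hfree : FreePair φ B (Algebra.adjoin ℂ {Y}))
    (f : ℂ → ℂ) (hf : ContinuousOn f (spectrum ℂ X))
    -- `μ` is the spectral distribution of `X` with respect to `φ`:
    (μ : Measure ℝ) [IsProbabilityMeasure μ]
    (hμsupp : ∀ᵐ x ∂μ, Complex.ofReal x ∈ spectrum ℂ X)
    (hμ : ∀ g : ℂ → ℂ, ContinuousOn g (spectrum ℂ X) →
      φ (cfc (p := IsStarNormal) g X) = ∫ x : ℝ, g (x : ℂ) ∂μ)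
    -- `δ` is the subordination function:
    (δ : ℂ → ℂ)
    (hδ : ∀ z : ℂ, 0 < z.im →
      E (Ring.inverse (z • (1 : A) - X -
            cfc (p := IsStarNormal) f X * Y * star (cfc (p := IsStarNormal) f X))) =
        Ring.inverse (z • (1 : A) - X -
          δ z • (cfc (p := IsStarNormal) f X * star (cfc (p := IsStarNormal) f X)))) :
    ∀ z : ℂ, 0 < z.im →
      φ (Ring.inverse (z • (1 : A) - X -
            cfc (p := IsStarNormal) f X * Y * star (cfc (p := IsStarNormal) f X)))
        = ∫ x : ℝ, (z - (x : ℂ) - δ z * (‖f (x : ℂ)‖ ^ 2 : ℝ))⁻¹ ∂μ := by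
  intro z hz
  have hXn : IsStarNormal X := hXsa.isStarNormal
  have hconj : ContinuousOn (fun w => star (f w)) (spectrum ℂ X) :=
    continuous_star.comp_continuousOn hf
  have hqc : ContinuousOn (fun w => f w * star (f w)) (spectrum ℂ X) := hf.mul hconj
  set g : ℂ → ℂ := fun w => (z - w) - δ z * (f w * star (f w)) with hgdef
  have hgc : ContinuousOn g (spectrum ℂ X) :=
    (continuousOn_const.sub (fun x hx => continuousWithinAt_id)).sub
      (continuousOn_const.mul hqc)
  have hFF : cfc (p := IsStarNormal) f X * star (cfc (p := IsStarNormal) f X)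
      = cfc (p := IsStarNormal) (fun w => f w * star (f w)) X := by
    rw [← cfc_star f X, ← cfc_mul f _ X hf hconj]
  have hWc : z • (1 : A) - X - δ z • cfc (p := IsStarNormal) (fun w => f w * star (f w)) X
      = cfc (p := IsStarNormal) g X := by
    rw [hgdef]
    rw [cfc_sub (fun w : ℂ => z - w) (fun w => δ z * (f w * star (f w))) X
      (continuousOn_const.sub (fun x hx => continuousWithinAt_id))
      (continuousOn_const.mul hqc)]
    rw [cfc_sub (fun _ : ℂ => z) (fun w : ℂ => w) X continuousOn_const
      (fun x hx => continuousWithinAt_id)]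
    rw [cfc_const z X, cfc_id' ℂ X, cfc_const_mul (δ z) _ X hqc]
    rw [Algebra.algebraMap_eq_smul_one]
  rw [(hEφ _).symm, hδ z hz, hFF, hWc]
  by_cases hu : IsUnit (cfc (p := IsStarNormal) g X)
  · have hne : ∀ w ∈ spectrum ℂ X, g w ≠ 0 := (isUnit_cfc_iff g X hgc hXn).mp hu
    rw [← cfc_inv g X hne hgc hXn]
    rw [hμ (fun x => (g x)⁻¹) (hgc.inv₀ hne)]
    refine integral_congr_ae (Filter.Eventually.of_forall fun x => ?_)
    have key : ((‖f (x:ℂ)‖ ^ 2 : ℝ) : ℂ) = f (x:ℂ) * star (f (x:ℂ)) := by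
      rw [Complex.sq_norm, ← Complex.mul_conj]
      rfl
    simp only [hgdef, key]
  · -- the degenerate case is impossible
    exfalso
    haveI : Nontrivial A := by
      by_contra h
      have hsub : Subsingleton A := not_nontrivial_iff_subsingleton.mp h
      have h10 : (1 : A) = 0 := Subsingleton.elim _ _
      have h0 : ‖φ (0 : A)‖ ≤ 0 := by simpa using hφb 0
      have h1 : φ (0 : A) = 0 := by
        have := norm_le_zero_iff.mp h0
        exact this
      rw [h10, h1] at hφ1
      exact one_ne_zero hφ1.symm
    have hE1 : E 1 = 1 := hEid 1 (one_mem B)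
    have hφsc : ∀ c : ℂ, φ (c • (1 : A)) = c := by
      intro c
      have h := hμ (fun _ => c) continuousOn_const
      rw [cfc_const c X hXn, Algebra.algebraMap_eq_smul_one] at h
      rw [h]
      simp
    have hVsa : IsSelfAdjoint (cfc (p := IsStarNormal) f X * Y *
        star (cfc (p := IsStarNormal) f X)) := by
      rw [IsSelfAdjoint]
      simp only [star_mul, star_star, hYsa.star_eq]
      rw [mul_assoc]
    have hT : IsSelfAdjoint (X + cfc (p := IsStarNormal) f X * Y *
        star (cfc (p := IsStarNormal) f X)) := hXsa.add hVsa
    have hEr : E (Ring.inverse (z • (1 : A) - (X + cfc (p := IsStarNormal) f X * Y *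
        star (cfc (p := IsStarNormal) f X)))) = 0 := by
      rw [← sub_sub, hδ z hz, hFF, hWc]
      exact Ring.inverse_non_unit _ hu
    exact resolvent_exp_ne_zero φ hφb E hE1 hEφ hφsc _ hT z hz hEr
end
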